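/- For every real number t > 0, define V₅(t) = 4t(2 + 4t⁻³) if t⁻³ ≤ 2/5, V₅(t) = t(14 + t⁻³) if 2/5 ≤ t⁻³ ≤ 10, and V₅(t) = 24t if t⁻³ ≥ 10. Then V₅(t) ∈ E(t), and every element e of E(t) with e ∉ {γ₁(t), γ₂(t), γ₃(t), 8t} satisfies e ≥ V₅(t). -/

import Mathlib

/-- `γ_n(t) = t·n·(2 + n·t⁻³)` -/
noncomputable def gammaF (t : ℝ) (n : ℕ) : ℝ := t * n * (2 + n * (t ^ 3)⁻¹)

/-- `α_k(t) = t·(k(k+2) − 1 + t⁻³)` -/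
noncomputable def alphaF (t : ℝ) (k : ℕ) : ℝ := t * (k * (k + 2) - 1 + (t ^ 3)⁻¹)

/-- `β_l(t) = t·l·(l+2)` -/
noncomputable def betaF (t : ℝ) (l : ℕ) : ℝ := t * l * (l + 2)

/-- The set `E(t)` of nonzero eigenvalues of the unit-volume Berger sphere Laplacian. -/
def EV (t : ℝ) : Set ℝ :=
  {x | ∃ n : ℕ, 1 ≤ n ∧ x = gammaF t n} ∪
  {x | ∃ k : ℕ, Odd k ∧ 1 ≤ k ∧ x = alphaF t k} ∪
  {x | ∃ l : ℕ, Even l ∧ 2 ≤ l ∧ x = betaF t l}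

/-!
The candidates for the fifth eigenvalue are `γ₄(t)`, `α₃(t)` and `β₄(t) = 24t`: each of the three
families is nondecreasing in its index, and the values discarded in the statement are exactly
`γ₁ = α₁`, `γ₂`, `γ₃` and `β₂ = 8t`. Comparing the three candidates in the variable `s = t⁻³`
gives `γ₄ ≤ α₃ ↔ s ≤ 2/5`, `γ₄ ≤ β₄ ↔ s ≤ 1` and `α₃ ≤ β₄ ↔ s ≤ 10`.
-/

section BergerSpectrum

variable {t : ℝ}

theorem gammaF_mono (ht : 0 ≤ t) : Monotone (gammaF t) := by
  intro m n hmn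
  unfold gammaF
  gcongr

theorem alphaF_mono (ht : 0 ≤ t) : Monotone (alphaF t) := by
  intro m n hmn
  unfold alphaF
  gcongr

theorem betaF_mono (ht : 0 ≤ t) : Monotone (betaF t) := by
  intro m n hmn
  unfold betaF
  gcongr

variable (t)

theorem alphaF_one : alphaF t 1 = gammaF t 1 := by
  unfold alphaF gammaF; push_cast; ring

theorem betaF_two : betaF t 2 = 8 * t := by
  unfold betaF; push_cast; ring

theorem gammaF_four : gammaF t 4 = 4 * t * (2 + 4 * (t ^ 3)⁻¹) := by
  unfold gammaF; push_cast; ring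

theorem alphaF_three : alphaF t 3 = t * (14 + (t ^ 3)⁻¹) := by
  unfold alphaF; push_cast; ring

theorem betaF_four : betaF t 4 = 24 * t := by
  unfold betaF; push_cast; ring

noncomputable def bergerLambda5 : ℝ := min (min (gammaF t 4) (alphaF t 3)) (betaF t 4)

theorem bergerLambda5_mem_EV : bergerLambda5 t ∈ EV t := by
  have hγ : gammaF t 4 ∈ EV t := Or.inl (Or.inl ⟨4, by norm_num, rfl⟩)
  have hα : alphaF t 3 ∈ EV t := Or.inl (Or.inr ⟨3, by decide, by norm_num, rfl⟩)
  have hβ : betaF t 4 ∈ EV t := Or.inr ⟨4, by decide, by norm_num, rfl⟩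
  unfold bergerLambda5
  rcases min_choice (min (gammaF t 4) (alphaF t 3)) (betaF t 4) with h | h <;> rw [h]
  · rcases min_choice (gammaF t 4) (alphaF t 3) with h' | h' <;> rw [h'] <;> assumption
  · exact hβ

variable {t}

theorem bergerLambda5_le_of_mem_EV (ht : 0 ≤ t) {e : ℝ} (he : e ∈ EV t)
    (hne : e ∉ ({gammaF t 1, gammaF t 2, gammaF t 3, 8 * t} : Set ℝ)) :
    bergerLambda5 t ≤ e := by
  simp only [Set.mem_insert_iff, Set.mem_singleton_iff, not_or] at hne
  obtain ⟨h1, h2, h3, h8⟩ := hne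
  rcases he with (⟨n, hn, rfl⟩ | ⟨k, hk, -, rfl⟩) | ⟨l, hl, hl2, rfl⟩
  · have hn4 : 4 ≤ n := by
      by_contra! hlt
      interval_cases n <;> contradiction
    calc bergerLambda5 t ≤ gammaF t 4 := (min_le_left _ _).trans (min_le_left _ _)
      _ ≤ gammaF t n := gammaF_mono ht hn4
  · have hk1 : k ≠ 1 := by
      rintro rfl
      exact h1 (alphaF_one t)
    have hk3 : 3 ≤ k := by
      obtain ⟨m, rfl⟩ := hk
      omega
    calc bergerLambda5 t ≤ alphaF t 3 := (min_le_left _ _).trans (min_le_right _ _)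
      _ ≤ alphaF t k := alphaF_mono ht hk3
  · have hl2' : l ≠ 2 := by
      rintro rfl
      exact h8 (betaF_two t)
    have hl4 : 4 ≤ l := by
      obtain ⟨m, rfl⟩ := hl
      omega
    calc bergerLambda5 t ≤ betaF t 4 := min_le_right _ _
      _ ≤ betaF t l := betaF_mono ht hl4

theorem bergerLambda5_of_le_two_fifths (ht : 0 < t) (hs : (t ^ 3)⁻¹ ≤ 2 / 5) :
    bergerLambda5 t = 4 * t * (2 + 4 * (t ^ 3)⁻¹) := by
  have hγα : gammaF t 4 ≤ alphaF t 3 := by rw [gammaF_four, alphaF_three]; nlinarith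
  have hγβ : gammaF t 4 ≤ betaF t 4 := by rw [gammaF_four, betaF_four]; nlinarith
  rw [bergerLambda5, min_eq_left hγα, min_eq_left hγβ, gammaF_four]

theorem bergerLambda5_of_mem_Icc (ht : 0 < t) (hs : 2 / 5 ≤ (t ^ 3)⁻¹ ∧ (t ^ 3)⁻¹ ≤ 10) :
    bergerLambda5 t = t * (14 + (t ^ 3)⁻¹) := by
  have hαγ : alphaF t 3 ≤ gammaF t 4 := by rw [gammaF_four, alphaF_three]; nlinarith
  have hαβ : alphaF t 3 ≤ betaF t 4 := by rw [alphaF_three, betaF_four]; nlinarith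
  rw [bergerLambda5, min_eq_right hαγ, min_eq_left hαβ, alphaF_three]

theorem bergerLambda5_of_ten_le (ht : 0 < t) (hs : 10 ≤ (t ^ 3)⁻¹) :
    bergerLambda5 t = 24 * t := by
  have hβγ : betaF t 4 ≤ gammaF t 4 := by rw [gammaF_four, betaF_four]; nlinarith
  have hβα : betaF t 4 ≤ alphaF t 3 := by rw [alphaF_three, betaF_four]; nlinarith
  rw [bergerLambda5, min_eq_right (le_min hβγ hβα), betaF_four]

end BergerSpectrum

theorem berger_lambda5 (t : ℝ) (ht : 0 < t) :
    ∃ V : ℝ,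
      ((t ^ 3)⁻¹ ≤ 2 / 5 → V = 4 * t * (2 + 4 * (t ^ 3)⁻¹)) ∧
      (2 / 5 ≤ (t ^ 3)⁻¹ ∧ (t ^ 3)⁻¹ ≤ 10 → V = t * (14 + (t ^ 3)⁻¹)) ∧
      (10 ≤ (t ^ 3)⁻¹ → V = 24 * t) ∧
      V ∈ EV t ∧
      ∀ e ∈ EV t, e ∉ ({gammaF t 1, gammaF t 2, gammaF t 3, 8 * t} : Set ℝ) → V ≤ e :=
  ⟨bergerLambda5 t, bergerLambda5_of_le_two_fifths ht, bergerLambda5_of_mem_Icc ht,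
    bergerLambda5_of_ten_le ht, bergerLambda5_mem_EV t,
    fun _ he hne => bergerLambda5_le_of_mem_EV ht.le he hne⟩
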